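/- arXiv:2303.09033 — 3 statements merged into one kernel-verified Lean document; each statement's English description precedes it below -/
import Mathlib

section
/- Let X be a random variable with Gamma distribution of shape α > 0 and rate β > 0. Then for every a with 0 ≤ a ≤ α/β, the left-tail probability satisfies P(X ≤ a) ≤ (aβ/α)^α · exp(α − aβ). -/
open Real MeasureTheory ProbabilityTheory

/-! Chernoff bound by exponential tilting: for `b ≥ β` the density of `Gamma(α, β)` is
`(β / b) ^ α * exp ((b - β) * x)` times that of `Gamma(α, b)`, and on `(-∞, a]` this factor is at
most its value at `x = a`. Integrating against the probability density of `Gamma(α, b)` bounds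
`P(X ≤ a)` by `(β / b) ^ α * exp ((b - β) * a)`, which the choice `b = α / a` minimizes. -/

namespace ProbabilityTheory

lemma gammaMeasure_Iic_zero (α β : ℝ) : gammaMeasure α β (Set.Iic 0) = 0 := by
  rw [gammaMeasure, withDensity_apply _ measurableSet_Iic, setLIntegral_congr Iio_ae_eq_Iic.symm,
    lintegral_gammaPDF_of_nonpos le_rfl]

lemma gammaPDFReal_eq_mul_gammaPDFReal {α β b : ℝ} (hβ : 0 ≤ β) (hb : 0 < b) (x : ℝ) :
    gammaPDFReal α β x = (β / b) ^ α * exp ((b - β) * x) * gammaPDFReal α b x := by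
  unfold gammaPDFReal
  split_ifs
  · have hexp : exp ((b - β) * x) * exp (-(b * x)) = exp (-(β * x)) := by
      rw [← exp_add]; ring_nf
    rw [div_rpow hβ hb.le, ← hexp]
    field_simp [(rpow_pos_of_pos hb α).ne']
  · rw [mul_zero]

lemma gammaMeasure_Iic_le {α β b : ℝ} (hα : 0 < α) (hβ : 0 < β) (hβb : β ≤ b) (a : ℝ) :
    gammaMeasure α β (Set.Iic a) ≤ ENNReal.ofReal ((β / b) ^ α * exp ((b - β) * a)) := by
  have hb : 0 < b := hβ.trans_le hβb
  set C := (β / b) ^ α * exp ((b - β) * a) with hC_def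
  have hC : 0 ≤ C := by positivity
  have hpdf : ∀ x ∈ Set.Iic a, gammaPDF α β x ≤ ENNReal.ofReal C * gammaPDF α b x := by
    intro x (hx : x ≤ a)
    rw [gammaPDF, gammaPDF, ← ENNReal.ofReal_mul hC, gammaPDFReal_eq_mul_gammaPDFReal hβ.le hb]
    have : 0 ≤ b - β := sub_nonneg.mpr hβb
    gcongr
    · exact gammaPDFReal_nonneg hα hb x
    · rw [hC_def]
      gcongr
  have hmeas : Measurable (gammaPDF α b) := (measurable_gammaPDFReal α b).ennreal_ofReal
  calc gammaMeasure α β (Set.Iic a) = ∫⁻ x in Set.Iic a, gammaPDF α β x :=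
        withDensity_apply _ measurableSet_Iic
    _ ≤ ∫⁻ x in Set.Iic a, ENNReal.ofReal C * gammaPDF α b x :=
        setLIntegral_mono (measurable_const.mul hmeas) hpdf
    _ ≤ ∫⁻ x, ENNReal.ofReal C * gammaPDF α b x := setLIntegral_le_lintegral _ _
    _ = ENNReal.ofReal C := by
        rw [lintegral_const_mul _ hmeas, lintegral_gammaPDF_eq_one hα hb, mul_one]

end ProbabilityTheory

/-- Left-tail bound for the Gamma distribution: if `X ∼ Gamma(α, β)` with shape `α > 0`
and rate `β > 0`, then for every `a` with `0 ≤ a ≤ α/β`,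
`P(X ≤ a) ≤ (aβ/α)^α · exp(α − aβ)`. -/
theorem gamma_left_tail_bound (α β : ℝ) (hα : 0 < α) (hβ : 0 < β)
    (a : ℝ) (ha : 0 ≤ a) (haub : a ≤ α / β) :
    gammaMeasure α β (Set.Iic a) ≤
      ENNReal.ofReal ((a * β / α) ^ α * Real.exp (α - a * β)) := by
  rcases ha.eq_or_lt with rfl | ha
  · rw [gammaMeasure_Iic_zero]
    exact zero_le
  have hβb : β ≤ α / a := by
    rw [le_div_iff₀ ha]
    linarith [(le_div_iff₀ hβ).mp haub]
  convert gammaMeasure_Iic_le hα hβ hβb a using 4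
  · field_simp
  · field_simp
end

section
/- Let K ≥ 1, n ≥ 1, and let N₁,…,N_K be nonnegative integers with ∑_{i=1}^K N_i = n. Let σ_i > 0 and σ_{0,i} > 0 for each i, and let L ≥ 0. Then ∑_{i=1}^K ∑_{s=0}^{N_i − 1} √(2 σ_i² L/(σ_i²/σ_{0,i}² + s)) ≤ √(2 n L) · √(∑_{i=1}^K σ_i² (log(1 + n σ_{0,i}²/σ_i²) + σ_{0,i}²/σ_i²)). (The inner sum is empty, hence zero, when N_i = 0.) -/
/-!
Write `c = σ²/σ₀²`. Each arm's posterior variances sum to `σ² ∑_{s<m} 1/(c+s)`, and comparing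
`1/(c+s+1)` with `log (c+s+1) - log (c+s)` bounds this harmonic-type sum by `1/c + log (1 + m/c)`.
Cauchy–Schwarz over the `n` pulls turns the sum of square roots into `√(n · ∑ widths²)`.
-/

open Finset Real

lemma inv_add_one_le_log_sub_log {x : ℝ} (hx : 0 < x) : (x + 1)⁻¹ ≤ log (x + 1) - log x := by
  have h := one_sub_inv_le_log_of_pos (by positivity : 0 < (x + 1) / x)
  rw [log_div (by positivity) hx.ne', inv_div] at h
  calc (x + 1)⁻¹ = 1 - x / (x + 1) := by field_simp; ring
    _ ≤ _ := h

lemma sum_range_inv_add_succ_le_log {c : ℝ} (hc : 0 < c) (m : ℕ) :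
    ∑ s ∈ range m, (c + (s + 1))⁻¹ ≤ log (1 + m / c) := by
  calc ∑ s ∈ range m, (c + (s + 1))⁻¹
      ≤ ∑ s ∈ range m, (log (c + (s + 1 : ℕ)) - log (c + s)) :=
        sum_le_sum fun s _ => by
          push_cast
          simpa only [add_assoc] using inv_add_one_le_log_sub_log (by positivity : 0 < c + s)
    _ = log (1 + m / c) := by
        rw [sum_range_sub (fun s : ℕ => log (c + s)), Nat.cast_zero, add_zero,
          ← log_div (by positivity) hc.ne', add_div, div_self hc.ne']

lemma sum_range_inv_add_le_inv_add_log {c : ℝ} (hc : 0 < c) (m : ℕ) :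
    ∑ s ∈ range m, (c + s)⁻¹ ≤ c⁻¹ + log (1 + m / c) := by
  calc ∑ s ∈ range m, (c + s)⁻¹
      ≤ ∑ s ∈ range (m + 1), (c + s)⁻¹ :=
        sum_le_sum_of_subset_of_nonneg (range_subset_range.2 m.le_succ)
          fun s _ _ => by positivity
    _ = ∑ s ∈ range m, (c + (s + 1))⁻¹ + c⁻¹ := by simp [sum_range_succ']
    _ ≤ c⁻¹ + log (1 + m / c) := by linarith [sum_range_inv_add_succ_le_log hc m]

lemma sum_range_posterior_variance_le {σ σ₀ : ℝ} (hσ : 0 < σ) (hσ₀ : 0 < σ₀) {m n : ℕ}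
    (hmn : m ≤ n) :
    ∑ s ∈ range m, σ ^ 2 / (σ ^ 2 / σ₀ ^ 2 + s) ≤
      σ ^ 2 * (log (1 + n * σ₀ ^ 2 / σ ^ 2) + σ₀ ^ 2 / σ ^ 2) := by
  have hc : 0 < σ ^ 2 / σ₀ ^ 2 := by positivity
  have hlog : log (1 + m / (σ ^ 2 / σ₀ ^ 2)) ≤ log (1 + n * σ₀ ^ 2 / σ ^ 2) := by
    rw [div_div_eq_mul_div]
    gcongr
  simp only [div_eq_mul_inv (σ ^ 2), ← mul_sum]
  gcongr
  calc ∑ s ∈ range m, (σ ^ 2 / σ₀ ^ 2 + s)⁻¹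
      ≤ (σ ^ 2 / σ₀ ^ 2)⁻¹ + log (1 + m / (σ ^ 2 / σ₀ ^ 2)) :=
        sum_range_inv_add_le_inv_add_log hc m
    _ ≤ _ := by rw [inv_div]; linarith

lemma sum_sqrt_le_sqrt_card_mul_sum {ι : Type*} {s : Finset ι} {f : ι → ℝ}
    (hf : ∀ i ∈ s, 0 ≤ f i) : ∑ i ∈ s, √(f i) ≤ √(#s * ∑ i ∈ s, f i) := by
  have h := sum_mul_le_sqrt_mul_sqrt s (fun _ => 1) (fun i => √(f i))
  simp only [one_mul, one_pow, sum_const, nsmul_eq_mul, mul_one] at h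
  rwa [sum_congr rfl fun i hi => sq_sqrt (hf i hi), ← sqrt_mul (Nat.cast_nonneg _)] at h

lemma sum_sum_sqrt_le_sqrt_card_mul_sum {ι : Type*} {κ : ι → Type*} {s : Finset ι}
    {t : ∀ i, Finset (κ i)} {f : ∀ i, κ i → ℝ} (hf : ∀ i ∈ s, ∀ j ∈ t i, 0 ≤ f i j) :
    ∑ i ∈ s, ∑ j ∈ t i, √(f i j) ≤ √((∑ i ∈ s, #(t i)) * ∑ i ∈ s, ∑ j ∈ t i, f i j) := by
  have h := sum_sqrt_le_sqrt_card_mul_sum (s := s.sigma t) (f := fun p => f p.1 p.2)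
    fun p hp => hf p.1 (mem_sigma.1 hp).1 p.2 (mem_sigma.1 hp).2
  rwa [sum_sigma, sum_sigma, card_sigma] at h

theorem confidence_width_sum_le_general
    (K n : ℕ) (N : Fin K → ℕ) (hN : ∑ i, N i = n)
    (σ σ₀ : Fin K → ℝ) (hσ : ∀ i, 0 < σ i) (hσ₀ : ∀ i, 0 < σ₀ i) (L : ℝ) (hL : 0 ≤ L) :
    (∑ i, ∑ s ∈ Finset.range (N i),
        Real.sqrt (2 * σ i ^ 2 * L / (σ i ^ 2 / σ₀ i ^ 2 + s))) ≤
      Real.sqrt (2 * n * L) *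
        Real.sqrt (∑ i, σ i ^ 2 *
          (Real.log (1 + n * σ₀ i ^ 2 / σ i ^ 2) + σ₀ i ^ 2 / σ i ^ 2)) := by
  have hNi : ∀ i, N i ≤ n := fun i => hN ▸ single_le_sum (fun j _ => (N j).zero_le) (mem_univ i)
  have hwidth : ∀ i, ∑ s ∈ range (N i), 2 * σ i ^ 2 * L / (σ i ^ 2 / σ₀ i ^ 2 + s) ≤
      2 * L * (σ i ^ 2 * (log (1 + n * σ₀ i ^ 2 / σ i ^ 2) + σ₀ i ^ 2 / σ i ^ 2)) := fun i => by
    rw [show ∑ s ∈ range (N i), 2 * σ i ^ 2 * L / (σ i ^ 2 / σ₀ i ^ 2 + s) =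
        2 * L * ∑ s ∈ range (N i), σ i ^ 2 / (σ i ^ 2 / σ₀ i ^ 2 + s) by
      rw [mul_sum]; exact sum_congr rfl fun s _ => by ring]
    gcongr
    exact sum_range_posterior_variance_le (hσ i) (hσ₀ i) (hNi i)
  calc _ ≤ √(n * ∑ i, ∑ s ∈ range (N i), 2 * σ i ^ 2 * L / (σ i ^ 2 / σ₀ i ^ 2 + s)) := by
        simpa only [card_range, hN] using
          sum_sum_sqrt_le_sqrt_card_mul_sum (s := univ) (t := fun i => range (N i))
          (f := fun i (s : ℕ) => 2 * σ i ^ 2 * L / (σ i ^ 2 / σ₀ i ^ 2 + s))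
          fun i _ s _ => by have := hσ₀ i; positivity
    _ ≤ √(n * ∑ i, 2 * L *
          (σ i ^ 2 * (log (1 + n * σ₀ i ^ 2 / σ i ^ 2) + σ₀ i ^ 2 / σ i ^ 2))) := by
        gcongr with i; exact hwidth i
    _ = _ := by
        rw [← mul_sum, ← sqrt_mul (by positivity)]
        ring_nf

/-- Deterministic bound on cumulative posterior confidence widths in a `K`-armed Gaussian
bandit: if arm `i` is pulled `N i` times in `n` rounds (`∑ i, N i = n`), with reward
variance `σᵢ²`, prior variance `σ₀ᵢ²`, and `L ≥ 0`, then
`∑ᵢ ∑_{s=0}^{Nᵢ−1} √(2σᵢ²L/(σᵢ²/σ₀ᵢ² + s))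
  ≤ √(2nL) √(∑ᵢ σᵢ²(log(1 + n σ₀ᵢ²/σᵢ²) + σ₀ᵢ²/σᵢ²))`. -/
theorem confidence_width_sum_le
    (K n : ℕ) (hK : 1 ≤ K) (hn : 1 ≤ n) (N : Fin K → ℕ) (hN : ∑ i, N i = n)
    (σ σ₀ : Fin K → ℝ) (hσ : ∀ i, 0 < σ i) (hσ₀ : ∀ i, 0 < σ₀ i) (L : ℝ) (hL : 0 ≤ L) :
    (∑ i, ∑ s ∈ Finset.range (N i),
        Real.sqrt (2 * σ i ^ 2 * L / (σ i ^ 2 / σ₀ i ^ 2 + s))) ≤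
      Real.sqrt (2 * n * L) *
        Real.sqrt (∑ i, σ i ^ 2 *
          (Real.log (1 + n * σ₀ i ^ 2 / σ i ^ 2) + σ₀ i ^ 2 / σ i ^ 2)) :=
  confidence_width_sum_le_general K n N hN σ σ₀ hσ hσ₀ L hL
end

section
/- Let (Ω, F, P) be a probability space, G ⊆ F a sub-σ-algebra, K ≥ 1, and let μ : Ω → ℝ^K be an integrable random vector with conditional means μ̂_i = E[μ_i | G]. Let A, A' : Ω → {1,…,K} be random indices such that: (i) for each i, E[μ_i · 1{A = i} | G] = μ̂_i · P(A = i | G) almost surely (A is conditionally independent of μ given G in this sense), and (ii) for each i, P(A = i | G) = P(A' = i | G) almost surely. Then E[μ_{A'} − μ_A] = E[μ_{A'} − μ̂_{A'}]. In particular, if A' is the index of the largest coordinate of μ, the per-round Bayes regret of the posterior-sampling action A equals the expected gap between μ_{A'} and its conditional mean. -/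
open MeasureTheory

/-- Bayes-regret decomposition for posterior sampling: if `X : Fin K → Ω → ℝ` is an
integrable random vector with conditional means `X̂ i = E[X i | G]`, and `A, A'` are
random indices such that (i) `E[X i · 1{A = i} | G] = X̂ i · P(A = i | G)` a.s. and
(ii) `P(A = i | G) = P(A' = i | G)` a.s. for each `i`, then
`E[X_{A'} − X_A] = E[X_{A'} − X̂_{A'}]`. -/
theorem bayes_regret_decomposition
    {Ω : Type*} (G : MeasurableSpace Ω) {F : MeasurableSpace Ω} (hG : G ≤ F)
    (P : Measure Ω) [IsProbabilityMeasure P]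
    (K : ℕ) (hK : 1 ≤ K) (X : Fin K → Ω → ℝ) (hXint : ∀ i, Integrable (X i) P)
    (A A' : Ω → Fin K) (hA : Measurable A) (hA' : Measurable A')
    (hindep : ∀ i, (P[fun ω => X i ω * (if A ω = i then (1 : ℝ) else 0)|G]) =ᵐ[P]
      fun ω => (P[X i|G]) ω * (P[fun ω' => if A ω' = i then (1 : ℝ) else 0|G]) ω)
    (hsame : ∀ i, (P[fun ω => if A ω = i then (1 : ℝ) else 0|G]) =ᵐ[P]
      (P[fun ω => if A' ω = i then (1 : ℝ) else 0|G])) :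
    (∫ ω, (X (A' ω) ω - X (A ω) ω) ∂P) =
      ∫ ω, (X (A' ω) ω - (P[X (A' ω)|G]) ω) ∂P := by
  classical
  have hsA' : ∀ i : Fin K, MeasurableSet {ω | A' ω = i} :=
    fun i => hA' (measurableSet_singleton i)
  have hsA : ∀ i : Fin K, MeasurableSet {ω | A ω = i} :=
    fun i => hA (measurableSet_singleton i)
  -- indicator form
  have hindform : ∀ (B : Ω → Fin K) (f : Fin K → Ω → ℝ) (i : Fin K),
      (fun ω => f i ω * (if B ω = i then (1:ℝ) else 0))
        = Set.indicator {ω | B ω = i} (f i) := by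
    intro B f i; funext ω; by_cases h : B ω = i <;> simp [Set.indicator, h]
  have hintA : ∀ i, Integrable (fun ω => X i ω * (if A ω = i then (1:ℝ) else 0)) P := by
    intro i; rw [hindform A X i]; exact (hXint i).indicator (hsA i)
  have hintA'h : ∀ i, Integrable (fun ω => (P[X i|G]) ω * (if A' ω = i then (1:ℝ) else 0)) P := by
    intro i; rw [hindform A' (fun i => P[X i|G]) i]
    exact integrable_condExp.indicator (hsA' i)
  have hintInd' : ∀ i, Integrable (fun ω => if A' ω = i then (1:ℝ) else 0) P := by
    intro i
    have : (fun ω => if A' ω = i then (1:ℝ) else 0)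
        = Set.indicator {ω | A' ω = i} (fun _ => (1:ℝ)) := by
      funext ω; by_cases h : A' ω = i <;> simp [Set.indicator, h]
    rw [this]; exact (integrable_const 1).indicator (hsA' i)
  -- key per-index identity
  have key : ∀ i, (∫ ω, X i ω * (if A ω = i then (1:ℝ) else 0) ∂P)
      = ∫ ω, (P[X i|G]) ω * (if A' ω = i then (1:ℝ) else 0) ∂P := by
    intro i
    have h1 : (∫ ω, X i ω * (if A ω = i then (1:ℝ) else 0) ∂P)
        = ∫ ω, (P[fun ω => X i ω * (if A ω = i then (1:ℝ) else 0)|G]) ω ∂P :=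
      (integral_condExp (μ := P) hG (f := fun ω => X i ω * (if A ω = i then (1:ℝ) else 0))).symm
    have h2 : (∫ ω, (P[fun ω => X i ω * (if A ω = i then (1:ℝ) else 0)|G]) ω ∂P)
        = ∫ ω, (P[X i|G]) ω * (P[fun ω' => if A' ω' = i then (1:ℝ) else 0|G]) ω ∂P := by
      refine integral_congr_ae ((hindep i).trans ?_)
      filter_upwards [hsame i] with ω h
      rw [h]
    have hmul : (P[(fun ω => (P[X i|G]) ω) * (fun ω => if A' ω = i then (1:ℝ) else 0)|G])
        =ᵐ[P] (fun ω => (P[X i|G]) ω) * (P[fun ω => if A' ω = i then (1:ℝ) else 0|G]) :=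
      condExp_mul_of_stronglyMeasurable_left stronglyMeasurable_condExp
        (by simpa [Pi.mul_def] using hintA'h i) (hintInd' i)
    have h3 : (∫ ω, (P[X i|G]) ω * (P[fun ω' => if A' ω' = i then (1:ℝ) else 0|G]) ω ∂P)
        = ∫ ω, (P[X i|G]) ω * (if A' ω = i then (1:ℝ) else 0) ∂P := by
      have := integral_congr_ae hmul.symm
      simpa [Pi.mul_apply] using this.trans (integral_condExp (μ := P) hG (f := (fun ω => (P[X i|G]) ω) * (fun ω => if A' ω = i then (1:ℝ) else 0)))
    rw [h1, h2, h3]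
  -- sum decompositions
  have hXAeq : ∀ ω, X (A ω) ω = ∑ i, X i ω * (if A ω = i then (1:ℝ) else 0) := by
    intro ω; simp [mul_ite, Finset.sum_ite_eq]
  have hXA'eq : ∀ ω, (P[X (A' ω)|G]) ω = ∑ i, (P[X i|G]) ω * (if A' ω = i then (1:ℝ) else 0) := by
    intro ω; simp [mul_ite, Finset.sum_ite_eq]
  have hintXA : Integrable (fun ω => X (A ω) ω) P := by
    have : (fun ω => X (A ω) ω) = fun ω => ∑ i, X i ω * (if A ω = i then (1:ℝ) else 0) := by
      funext ω; exact hXAeq ω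
    rw [this]; exact integrable_finset_sum _ fun i _ => hintA i
  have hintXA' : Integrable (fun ω => X (A' ω) ω) P := by
    have : (fun ω => X (A' ω) ω) = fun ω => ∑ i, X i ω * (if A' ω = i then (1:ℝ) else 0) := by
      funext ω; simp [mul_ite, Finset.sum_ite_eq]
    rw [this]
    refine integrable_finset_sum _ fun i _ => ?_
    rw [hindform A' X i]; exact (hXint i).indicator (hsA' i)
  have hintXhA' : Integrable (fun ω => (P[X (A' ω)|G]) ω) P := by
    have : (fun ω => (P[X (A' ω)|G]) ω)
        = fun ω => ∑ i, (P[X i|G]) ω * (if A' ω = i then (1:ℝ) else 0) := by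
      funext ω; exact hXA'eq ω
    rw [this]; exact integrable_finset_sum _ fun i _ => hintA'h i
  rw [integral_sub hintXA' hintXA, integral_sub hintXA' hintXhA']
  congr 1
  calc (∫ ω, X (A ω) ω ∂P)
      = ∫ ω, ∑ i, X i ω * (if A ω = i then (1:ℝ) else 0) ∂P := by
        exact integral_congr_ae (Filter.Eventually.of_forall hXAeq)
    _ = ∑ i, ∫ ω, X i ω * (if A ω = i then (1:ℝ) else 0) ∂P :=
        integral_finset_sum _ fun i _ => hintA i
    _ = ∑ i, ∫ ω, (P[X i|G]) ω * (if A' ω = i then (1:ℝ) else 0) ∂P := by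
        exact Finset.sum_congr rfl fun i _ => key i
    _ = ∫ ω, ∑ i, (P[X i|G]) ω * (if A' ω = i then (1:ℝ) else 0) ∂P :=
        (integral_finset_sum _ fun i _ => hintA'h i).symm
    _ = ∫ ω, (P[X (A' ω)|G]) ω ∂P :=
        integral_congr_ae (Filter.Eventually.of_forall fun ω => (hXA'eq ω).symm)
end
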